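/- Let C be a planar convex body that is k-rotationally symmetric about a point p in its interior, for an integer k ≥ 6. Then R < 2 sin(π/5) · r = √((5 − √5)/2) · r, where r = dist(p, ∂C) and R = sup_{y ∈ C} dist(p, y). -/

import Mathlib

open Metric Set

/-- Rotation of angle `α` about the point `p` in the plane `ℂ`. -/
noncomputable def rot (p : ℂ) (α : ℝ) : ℂ → ℂ :=
  fun z => p + Complex.exp (α * Complex.I) * (z - p)

/-- A planar convex body: a compact convex subset of the plane with nonempty interior. -/
def IsConvexBody (C : Set ℂ) : Prop :=
  IsCompact C ∧ Convex ℝ C ∧ (interior C).Nonempty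

/-- `C` is `k`-rotationally symmetric about `p`: the rotation of angle `2π/k`
about `p` maps `C` onto itself. -/
def IsRotSym (C : Set ℂ) (p : ℂ) (k : ℕ) : Prop :=
  rot p (2 * Real.pi / k) '' C = C

/-- The closed convex sector at `p` spanned by `x - p` and `ρ_k(x) - p`. -/
noncomputable def sector (p x : ℂ) (k : ℕ) : Set ℂ :=
  {z | ∃ a b : ℝ, 0 ≤ a ∧ 0 ≤ b ∧
    z = p + (a : ℂ) * (x - p) + (b : ℂ) * (rot p (2 * Real.pi / k) x - p)}

/-- The maximum relative diameter of the standard `k`-partition of `C`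
(with center `p` and endpoint `x`): the diameter of one piece `C ∩ S_k`. -/
noncomputable def dM (C : Set ℂ) (p x : ℂ) (k : ℕ) : ℝ :=
  Metric.diam (C ∩ sector p x k)

/-- The circumradius of `C` with respect to `p`: `sup_{y ∈ C} dist p y`. -/
noncomputable def circumrad (C : Set ℂ) (p : ℂ) : ℝ :=
  ⨆ y ∈ C, dist p y

/-!
Let `q` be a frontier point of `C` nearest to `p`, so `r = |q - p|`, and let `f` be a nonzero
linear functional supporting `C` at `q`; then `f (z - p) ≤ f (q - p) ≤ ‖f‖ r` on `C`.
Any `y ∈ C` can be rotated about `p` by a multiple of `2π/k` so that the angle between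
`y - p` and the direction of `f` is at most `π/k`, which gives `|y - p| cos (π/k) ≤ r`.
For `k ≥ 6` this bounds `R` by `r / cos (π/6) = 2r/√3`, and `2/√3 < 2 sin (π/5)`.
-/

open Real ComplexConjugate

lemma rot_rot (p : ℂ) (α β : ℝ) (z : ℂ) : rot p α (rot p β z) = rot p (α + β) z := by
  simp only [rot, add_sub_cancel_left, Complex.ofReal_add, add_mul, Complex.exp_add]
  ring

lemma rot_zero (p : ℂ) : rot p 0 = id := by
  ext z
  simp [rot]

lemma rot_sub_self (p : ℂ) (α : ℝ) (z : ℂ) :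
    rot p α z - p = Complex.exp (α * Complex.I) * (z - p) :=
  add_sub_cancel_left _ _

namespace IsRotSym

variable {C : Set ℂ} {p z : ℂ} {k : ℕ}

lemma rot_mem (h : IsRotSym C p k) (hz : z ∈ C) : rot p (2 * π / k) z ∈ C :=
  h ▸ mem_image_of_mem _ hz

lemma rot_neg_mem (h : IsRotSym C p k) (hz : z ∈ C) : rot p (-(2 * π / k)) z ∈ C := by
  rw [← h] at hz
  obtain ⟨w, hw, rfl⟩ := hz
  rwa [rot_rot, neg_add_cancel, rot_zero]

lemma rot_int_mul_mem (h : IsRotSym C p k) (hz : z ∈ C) (N : ℤ) :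
    rot p (N * (2 * π / k)) z ∈ C := by
  induction N using Int.induction_on with
  | zero => simpa [rot_zero] using hz
  | succ n ih =>
    convert h.rot_mem ih using 1
    rw [rot_rot]
    push_cast
    ring_nf
  | pred n ih =>
    convert h.rot_neg_mem ih using 1
    rw [rot_rot]
    push_cast
    ring_nf

end IsRotSym

lemma exists_int_abs_mul_add_le {α : ℝ} (hα : 0 < α) (ψ : ℝ) :
    ∃ N : ℤ, |N * α + ψ| ≤ α / 2 := by
  refine ⟨-round (ψ / α), ?_⟩
  have h : ((-round (ψ / α) : ℤ) : ℝ) * α + ψ = α * (ψ / α - round (ψ / α)) := by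
    push_cast
    field_simp
    ring
  rw [h, abs_mul, abs_of_pos hα]
  linarith [mul_le_mul_of_nonneg_left (abs_sub_round (ψ / α)) hα.le]

lemma exists_int_cos_pi_div_le_cos {k : ℕ} (hk : 0 < k) (ψ : ℝ) :
    ∃ N : ℤ, cos (π / k) ≤ cos (N * (2 * π / k) + ψ) := by
  obtain ⟨N, hN⟩ := exists_int_abs_mul_add_le (by positivity : 0 < 2 * π / k) ψ
  refine ⟨N, ?_⟩
  rw [← cos_abs (N * _ + ψ)]
  apply cos_le_cos_of_nonneg_of_le_pi (abs_nonneg _)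
  · exact div_le_self pi_pos.le (by exact_mod_cast hk)
  · exact hN.trans_eq (by ring)

lemma exists_int_norm_mul_cos_le_re_exp_mul {k : ℕ} (hk : 0 < k) (u : ℂ) :
    ∃ N : ℤ, ‖u‖ * cos (π / k) ≤
      (Complex.exp ((N * (2 * π / k) : ℝ) * Complex.I) * u).re := by
  obtain ⟨N, hN⟩ := exists_int_cos_pi_div_le_cos hk (Complex.arg u)
  refine ⟨N, ?_⟩
  have h : Complex.exp ((N * (2 * π / k) : ℝ) * Complex.I) * u
      = ‖u‖ * Complex.exp ((N * (2 * π / k) + Complex.arg u : ℝ) * Complex.I) := by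
    conv_lhs => rw [← Complex.norm_mul_exp_arg_mul_I u]
    rw [Complex.ofReal_add, add_mul, Complex.exp_add]
    ring
  rw [h, Complex.re_ofReal_mul, Complex.exp_ofReal_mul_I_re]
  exact mul_le_mul_of_nonneg_left hN (norm_nonneg u)

lemma exists_int_norm_mul_cos_le_apply_exp_mul (f : StrongDual ℝ ℂ) {k : ℕ} (hk : 0 < k)
    (w : ℂ) : ∃ N : ℤ, ‖w‖ * ‖f‖ * cos (π / k) ≤
      f (Complex.exp ((N * (2 * π / k) : ℝ) * Complex.I) * w) := by
  set n := (InnerProductSpace.toDual ℝ ℂ).symm f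
  have hf : ∀ z, f z = (z * conj n).re := fun z => by
    rw [← Complex.inner, InnerProductSpace.toDual_symm_apply]
  have hn : ‖n‖ = ‖f‖ := LinearIsometryEquiv.norm_map _ f
  obtain ⟨N, hN⟩ := exists_int_norm_mul_cos_le_re_exp_mul hk (w * conj n)
  refine ⟨N, ?_⟩
  rwa [hf, ← hn, ← Complex.norm_conj n, ← norm_mul, mul_assoc (Complex.exp _)]

theorem IsRotSym.dist_mul_cos_le_infDist_frontier {C : Set ℂ} {p : ℂ} {k : ℕ}
    (hsym : IsRotSym C p k) (hk : 0 < k) (hconv : Convex ℝ C) (hfr : (frontier C).Nonempty)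
    (hp : p ∈ interior C) {y : ℂ} (hy : y ∈ C) :
    dist p y * cos (π / k) ≤ infDist p (frontier C) := by
  obtain ⟨q, hq, hpq⟩ := isClosed_frontier.exists_infDist_eq_dist hfr p
  obtain ⟨f, hf0, hfq⟩ := geometric_hahn_banach_of_nonempty_interior_point hconv hq.2 ⟨p, hp⟩
  obtain ⟨N, hN⟩ := exists_int_norm_mul_cos_le_apply_exp_mul f hk (y - p)
  have hrot : f (rot p (N * (2 * π / k)) y - p) ≤ f (q - p) := by
    simp only [map_sub]
    linarith [hfq _ (hsym.rot_int_mul_mem hy N)]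
  have hsupport : f (q - p) ≤ ‖f‖ * dist p q := by
    rw [dist_comm, dist_eq_norm]
    exact (le_abs_self _).trans (f.le_opNorm _)
  rw [rot_sub_self] at hrot
  rw [hpq, dist_comm, dist_eq_norm]
  refine le_of_mul_le_mul_left ?_ (norm_pos_iff.2 hf0)
  linarith

lemma circumrad_le {C : Set ℂ} {p : ℂ} {b : ℝ} (hb : 0 ≤ b) (h : ∀ y ∈ C, dist p y ≤ b) :
    circumrad C p ≤ b :=
  Real.iSup_le (fun y => Real.iSup_le (h y) hb) hb

lemma two_mul_sin_pi_div_five : 2 * sin (π / 5) = √((5 - √5) / 2) := by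
  have h5 : √5 ^ 2 = 5 := sq_sqrt (by norm_num)
  have hsq : (2 * sin (π / 5)) ^ 2 = (5 - √5) / 2 := by
    have hs := sin_sq_add_cos_sq (π / 5)
    rw [cos_pi_div_five] at hs
    nlinarith
  have hpos : 0 < sin (π / 5) := sin_pos_of_pos_of_lt_pi (by positivity) (by linarith [pi_pos])
  rw [← hsq, sqrt_sq (by positivity)]

lemma one_lt_two_mul_sin_pi_div_five_mul_cos_pi_div_six :
    1 < 2 * sin (π / 5) * cos (π / 6) := by
  rw [two_mul_sin_pi_div_five, cos_pi_div_six]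
  have h5 : √5 < 7 / 3 := (sqrt_lt' (by norm_num)).2 (by norm_num)
  have hs : √((5 - √5) / 2) ^ 2 = (5 - √5) / 2 := sq_sqrt (by linarith)
  have h3 : √3 ^ 2 = 3 := sq_sqrt (by norm_num)
  have hprod : 0 ≤ √((5 - √5) / 2) * √3 := by positivity
  nlinarith

/-- For a `k`-rotationally symmetric planar convex body with `k ≥ 6`,
the circumradius and inradius (with respect to the center `p`)
satisfy `R < 2 sin(π/5) · r = √((5 − √5)/2) · r`. -/
theorem stmt_10 (C : Set ℂ) (p : ℂ) (k : ℕ) (hC : IsConvexBody C)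
    (hk : 6 ≤ k) (hsym : IsRotSym C p k) (hp : p ∈ interior C) :
    circumrad C p < 2 * Real.sin (Real.pi / 5) * infDist p (frontier C) ∧
      2 * Real.sin (Real.pi / 5) = Real.sqrt ((5 - Real.sqrt 5) / 2) := by
  obtain ⟨hcomp, hconv, -⟩ := hC
  refine ⟨?_, two_mul_sin_pi_div_five⟩
  set r := infDist p (frontier C)
  have hfr : (frontier C).Nonempty :=
    nonempty_frontier_iff.2 ⟨⟨p, interior_subset hp⟩, hcomp.ne_univ⟩
  have hr : 0 < r := (isClosed_frontier.notMem_iff_infDist_pos hfr).1 fun h => h.2 hp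
  have hcos : cos (π / 6) ≤ cos (π / k) :=
    cos_le_cos_of_nonneg_of_le_pi (by positivity) (by linarith [pi_pos])
      (div_le_div_of_nonneg_left pi_pos.le (by norm_num) (by exact_mod_cast hk))
  have hcos6 : 0 < cos (π / 6) := by
    rw [cos_pi_div_six]
    positivity
  calc circumrad C p ≤ r / cos (π / 6) := circumrad_le (by positivity) fun y hy => by
        rw [le_div_iff₀ hcos6]
        exact (mul_le_mul_of_nonneg_left hcos dist_nonneg).trans
          (hsym.dist_mul_cos_le_infDist_frontier (by omega) hconv hfr hp hy)
    _ < 2 * sin (π / 5) * r := by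
        rw [div_lt_iff₀ hcos6]
        nlinarith [one_lt_two_mul_sin_pi_div_five_mul_cos_pi_div_six]
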